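/- If in the perfect-set game of length ω₁ Player I has a winning strategy, then the payoff set X ⊆ (ω₁ → Bool) contains a perfect subset of height ω₁ (the set of plays consistent with the strategy contains the paths of a perfect tree of height ω₁ all of whose paths lie in X). -/

import Mathlib

/-- The first uncountable ordinal. -/
noncomputable def Omega1 : Ordinal := (Cardinal.aleph 1).ord

/-- Binary sequences of length `β`. -/
abbrev OSeq (β : Ordinal) := Set.Iio β → Bool

/-- The restriction of a sequence of length `β` to length `γ ≤ β`. -/
def resSeq {β γ : Ordinal} (h : γ ≤ β) (s : OSeq β) : OSeq γ :=
  fun δ => s ⟨δ.val, Set.mem_Iio.mpr (lt_of_lt_of_le (Set.mem_Iio.mp δ.2) h)⟩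

/-- A tree of height `o`, closed under initial segments. -/
def IsTree {o : Ordinal} (T : Set (Σ β : Set.Iio o, OSeq β.val)) : Prop :=
  ∀ β : Set.Iio o, ∀ s : OSeq β.val, (⟨β, s⟩ : Σ β : Set.Iio o, OSeq β.val) ∈ T →
    ∀ γ : Set.Iio o, ∀ h : γ.val ≤ β.val,
      (⟨γ, resSeq h s⟩ : Σ β : Set.Iio o, OSeq β.val) ∈ T

/-- A path through the tree `T`. -/
def IsPath {o : Ordinal} (T : Set (Σ β : Set.Iio o, OSeq β.val))
    (f : OSeq o) : Prop :=
  ∀ β : Set.Iio o,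
    (⟨β, resSeq (le_of_lt (Set.mem_Iio.mp β.2)) f⟩ : Σ β : Set.Iio o, OSeq β.val) ∈ T

/-- `s` is an initial segment of `t`. -/
def SegLE {o : Ordinal} (s t : Σ β : Set.Iio o, OSeq β.val) : Prop :=
  ∃ h : s.1.val ≤ t.1.val, s.2 = resSeq h t.2

/-- `s` is an initial segment of the length-`o` sequence `f`. -/
def SegOf {o : Ordinal} (s : Σ β : Set.Iio o, OSeq β.val) (f : OSeq o) : Prop :=
  s.2 = resSeq (le_of_lt (Set.mem_Iio.mp s.1.2)) f

/-- The one-point extension of the initial segment of `f` of length `β` by `b`. -/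
noncomputable def extSeq {o : Ordinal} (f : OSeq o) (β : Set.Iio o) (b : Bool) :
    OSeq (β.val + 1) :=
  fun γ => if h : γ.val < β.val
    then f ⟨γ.val, Set.mem_Iio.mpr (lt_trans h (Set.mem_Iio.mp β.2))⟩
    else b

/-- `β` is a branching point of `T` along the path `f`. -/
def BranchesAt {o : Ordinal} (T : Set (Σ β : Set.Iio o, OSeq β.val))
    (f : OSeq o) (β : Set.Iio o) : Prop :=
  ∀ h : β.val + 1 < o, ∀ b : Bool,
    (⟨⟨β.val + 1, Set.mem_Iio.mpr h⟩, extSeq f β b⟩ : Σ β : Set.Iio o, OSeq β.val) ∈ T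

/-- A perfect tree of height `κ.ord`: every chain is contained in a path and
every path has `κ`-many branching points. -/
def IsPerfectTree (κ : Cardinal.{u}) (T : Set (Σ β : Set.Iio κ.ord, OSeq β.val)) : Prop :=
  (∀ C ⊆ T, IsChain SegLE C → ∃ f : OSeq κ.ord, IsPath T f ∧ ∀ s ∈ C, SegOf s f) ∧
  (∀ f : OSeq κ.ord, IsPath T f →
    Cardinal.mk {β : Set.Iio κ.ord // BranchesAt T f β} = Cardinal.lift.{u + 1} κ)

/-- A position of the perfect-set game: a binary sequence of countable length. -/
def GState := Σ β : Set.Iio Omega1, OSeq β.val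

/-- The position of length `β` determined by the length-`ω₁` sequence `x`. -/
noncomputable def gStateAt (x : OSeq Omega1) (β : Set.Iio Omega1) : GState :=
  ⟨β, resSeq (le_of_lt (Set.mem_Iio.mp β.2)) x⟩

/-- Validity of the record `(x, L)` of a play: `L α` is the position at which
Player II's bit of round `α` is placed, and `L` is strictly increasing. -/
def ValidL (L : Set.Iio Omega1 → Set.Iio Omega1) : Prop :=
  ∀ γ α : Set.Iio Omega1, γ.val < α.val → (L γ).val < (L α).val

/-- The total length of the position produced by all rounds before round `α`
(each round `γ < α` ends with Player II's bit at position `L γ`). -/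
noncomputable def prevLen (L : Set.Iio Omega1 → Set.Iio Omega1)
    (α : Set.Iio Omega1) : Ordinal :=
  ⨆ γ : Set.Iio α.val, ((L ⟨γ.val, Set.mem_Iio.mpr
      (lt_trans (Set.mem_Iio.mp γ.2) (Set.mem_Iio.mp α.2))⟩).val + 1)

/-- The play `(x, L)` is consistent with Player I's strategy `σ` (which extends
any position by a countable sequence): at each round `α`, applying `σ` to the
position left by the previous rounds yields the position of length `L α`
(whereupon Player II places the bit `x (L α)`). -/
def GConsI (σ : GState → GState) (x : OSeq Omega1)
    (L : Set.Iio Omega1 → Set.Iio Omega1) : Prop :=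
  ∀ α : Set.Iio Omega1, ∀ h : prevLen L α < Omega1,
    σ (gStateAt x ⟨prevLen L α, Set.mem_Iio.mpr h⟩) = gStateAt x (L α)

/-- A legal strategy for Player I extends the current position. -/
def GLegal (σ : GState → GState) : Prop :=
  ∀ s : GState, SegLE s (σ s)
namespace PSG
open Ordinal Cardinal Set

universe u

noncomputable section

lemma omega1_isLimit : Order.IsSuccLimit Omega1.{u} := Cardinal.isSuccLimit_ord (Cardinal.aleph0_le_aleph 1)

lemma omega1_pos : (0 : Ordinal) < Omega1.{u} := omega1_isLimit.pos

lemma succ_lt_omega1 {β : Ordinal} (h : β < Omega1.{u}) : β + 1 < Omega1.{u} := by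
  rw [add_one_eq_succ]; exact omega1_isLimit.succ_lt h

/-- Raw positions: binary sequences of arbitrary ordinal length. -/
abbrev RawS := Σ β : Ordinal.{u}, OSeq β

/-- Initial-segment relation for raw positions, pointwise form. -/
def RawLE (s t : RawS.{u}) : Prop :=
  ∃ h : s.1 ≤ t.1, ∀ δ (hδ : δ < s.1), s.2 ⟨δ, hδ⟩ = t.2 ⟨δ, lt_of_lt_of_le hδ h⟩

lemma RawLE.refl (s : RawS.{u}) : RawLE s s := ⟨le_refl _, fun _ _ => rfl⟩

lemma RawLE.trans {s t w : RawS.{u}} (h1 : RawLE s t) (h2 : RawLE t w) : RawLE s w := by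
  obtain ⟨a, ha⟩ := h1; obtain ⟨b, hb⟩ := h2
  exact ⟨a.trans b, fun δ hδ => (ha δ hδ).trans (hb δ _)⟩

/-- View a raw position of countable length as a game position. -/
def toG (s : RawS.{u}) (h : s.1 < Omega1.{u}) : GState.{u} := ⟨⟨s.1, h⟩, s.2⟩

lemma toG_congr {s s' : RawS.{u}} (e : s = s') {h : s.1 < Omega1.{u}} {h' : s'.1 < Omega1.{u}} :
    toG s h = toG s' h' := by subst e; rfl

/-- Append Player II's bit (read off from `y` at the current length) to a position. -/
def pushRaw (t : GState.{u}) (y : OSeq Omega1.{u}) : RawS.{u} :=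
  ⟨t.1.val + 1, fun δ =>
    if h : δ.val < t.1.val then t.2 ⟨δ.val, h⟩ else y t.1⟩

variable (σ : GState.{u} → GState.{u})

/-- One round of the game. -/
def succH (y : OSeq Omega1.{u}) (s : RawS.{u}) : RawS.{u} :=
  if h : s.1 < Omega1.{u} then pushRaw (σ (toG s h)) y else ⟨0, fun _ => false⟩

/-- Union at limit stages. -/
def limH (α : Ordinal) (ih : ∀ γ < α, RawS.{u}) : RawS.{u} :=
  ⟨Ordinal.bsup.{u,u} α (fun γ h => (ih γ h).1),
   fun δ =>
     let H := (Ordinal.lt_bsup (fun γ h => (ih γ h).1)).1 (Set.mem_Iio.mp δ.2)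
     (ih H.choose H.choose_spec.choose).2 ⟨δ.val, H.choose_spec.choose_spec⟩⟩

/-- The position after all rounds `< α` of the play where I follows `σ` and
II's bits are read off from `y` (indexed by position). -/
def F (y : OSeq Omega1.{u}) (α : Ordinal) : RawS.{u} :=
  limitRecOn α ⟨0, fun _ => false⟩ (fun _ s => succH σ y s) (fun β _ ih => limH β ih)

lemma F_zero (y : OSeq Omega1.{u}) : F σ y 0 = ⟨0, fun _ => false⟩ := by
  unfold F; rw [limitRecOn_zero]

lemma F_succ (y : OSeq Omega1.{u}) (γ : Ordinal) :
    F σ y (Order.succ γ) = succH σ y (F σ y γ) := by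
  unfold F; rw [limitRecOn_succ]

lemma F_lim (y : OSeq Omega1.{u}) {α : Ordinal} (hα : Order.IsSuccLimit α) :
    F σ y α = limH α (fun γ _ => F σ y γ) := by
  unfold F; rw [limitRecOn_limit _ _ _ _ hα]

lemma limH_snd {α : Ordinal} {ih : ∀ γ < α, RawS.{u}}
    (mono : ∀ γ hγ γ' hγ', γ ≤ γ' → RawLE (ih γ hγ) (ih γ' hγ'))
    {δ : Ordinal} (hmem : δ < (limH α ih).1) (γ : Ordinal) (hγ : γ < α)
    (hδ : δ < (ih γ hγ).1) :
    (limH α ih).2 ⟨δ, hmem⟩ = (ih γ hγ).2 ⟨δ, hδ⟩ := by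
  show (let H := (Ordinal.lt_bsup (fun γ h => (ih γ h).1)).1 (Set.mem_Iio.mp hmem)
     (ih H.choose H.choose_spec.choose).2 ⟨δ, H.choose_spec.choose_spec⟩) = _
  set H := (Ordinal.lt_bsup (fun γ h => (ih γ h).1)).1 (Set.mem_Iio.mp hmem) with hH
  rcases le_total H.choose γ with hle | hle
  · obtain ⟨h1, h2⟩ := mono H.choose H.choose_spec.choose γ hγ hle
    exact h2 δ H.choose_spec.choose_spec
  · obtain ⟨h1, h2⟩ := mono γ hγ H.choose H.choose_spec.choose hle
    exact (h2 δ hδ).symm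

variable {σ}

/-- The big invariant: lengths are countable, grow at least linearly, and the
positions form a chain. -/
lemma stages (hσ : GLegal.{u} σ) (y : OSeq Omega1.{u}) :
    ∀ α, α < Omega1.{u} →
      ((F σ y α).1 < Omega1.{u} ∧ α ≤ (F σ y α).1) ∧
      ∀ γ, γ < α → RawLE (F σ y γ) (F σ y α) := by
  intro α
  induction α using Ordinal.induction with
  | _ α IH =>
  intro hα
  rcases Ordinal.zero_or_succ_or_isSuccLimit α with h0 | ⟨γ, rfl⟩ | hlim
  · subst h0
    refine ⟨⟨?_, ?_⟩, ?_⟩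
    · rw [F_zero]; exact omega1_pos
    · rw [F_zero]
    · intro γ hγ; exact absurd hγ not_lt_zero
  · -- successor case
    have hγω : γ < Omega1.{u} := lt_of_le_of_lt (le_of_lt (Order.lt_succ γ)) hα
    obtain ⟨⟨hlen, hge⟩, hmono⟩ := IH γ (Order.lt_succ γ) hγω
    have hF : F σ y (Order.succ γ) = pushRaw (σ (toG (F σ y γ) hlen)) y := by
      rw [F_succ]; unfold succH; rw [dif_pos hlen]
    set t := σ (toG (F σ y γ) hlen) with ht
    have hleg : SegLE (toG (F σ y γ) hlen) t := hσ _
    obtain ⟨hle1, hseg⟩ := hleg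
    have hle1' : (F σ y γ).1 ≤ t.1.val := hle1
    have step : RawLE (F σ y γ) (F σ y (Order.succ γ)) := by
      rw [hF]
      refine ⟨hle1'.trans (le_of_lt (lt_add_one _)), fun δ hδ => ?_⟩
      show (F σ y γ).2 ⟨δ, hδ⟩ = dite _ _ _
      rw [dif_pos (lt_of_lt_of_le hδ hle1')]
      have := congrFun hseg ⟨δ, hδ⟩
      exact this
    refine ⟨⟨?_, ?_⟩, ?_⟩
    · rw [hF]; exact succ_lt_omega1 t.1.2
    · rw [hF]
      show Order.succ γ ≤ t.1.val + 1
      rw [add_one_eq_succ]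
      exact Order.succ_le_succ (hge.trans hle1')
    · intro β hβ
      rcases (Order.lt_succ_iff.mp hβ).lt_or_eq with hβγ | rfl
      · exact (hmono β hβγ).trans step
      · exact step
  · -- limit case
    have hF := F_lim σ y hlim
    have mono' : ∀ γ, γ < α → ∀ γ', γ' < α → γ ≤ γ' →
        RawLE (F σ y γ) (F σ y γ') := by
      intro γ hγ γ' hγ' hle
      rcases hle.lt_or_eq with h | rfl
      · exact (IH γ' hγ' (hγ'.trans hα)).2 γ h
      · exact RawLE.refl _
    refine ⟨⟨?_, ?_⟩, ?_⟩
    · rw [hF]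
      show Ordinal.bsup.{u,u} α _ < Omega1.{u}
      refine Cardinal.bsup_lt_ord_of_isRegular Cardinal.isRegular_aleph_one
        (Cardinal.lt_ord.mp hα) ?_
      intro γ hγ
      exact ((IH γ hγ (hγ.trans hα)).1).1
    · rw [hF]
      show α ≤ Ordinal.bsup.{u,u} α _
      rw [hlim.le_iff_forall_le]
      intro β hβ
      have hsβ : Order.succ β < α := hlim.succ_lt hβ
      calc β ≤ Order.succ β := le_of_lt (Order.lt_succ β)
        _ ≤ (F σ y (Order.succ β)).1 := (IH _ hsβ (hsβ.trans hα)).1.2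
        _ ≤ _ := Ordinal.le_bsup _ _ hsβ
    · intro γ hγ
      rw [hF]
      refine ⟨Ordinal.le_bsup (fun γ h => (F σ y γ).1) γ hγ, fun δ hδ => ?_⟩
      exact (limH_snd (fun a ha b hb hab => mono' a ha b hb hab) _ γ hγ hδ).symm

def lenF (y : OSeq Omega1.{u}) (α : Ordinal) : Ordinal := (F σ y α).1

lemma lenF_lt (hσ : GLegal.{u} σ) (y : OSeq Omega1.{u}) {α : Ordinal} (hα : α < Omega1.{u}) :
    lenF (σ := σ) y α < Omega1.{u} := (stages hσ y α hα).1.1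

lemma le_lenF (hσ : GLegal.{u} σ) (y : OSeq Omega1.{u}) {α : Ordinal} (hα : α < Omega1.{u}) :
    α ≤ lenF (σ := σ) y α := (stages hσ y α hα).1.2

lemma F_mono (hσ : GLegal.{u} σ) (y : OSeq Omega1.{u}) {γ α : Ordinal} (hγα : γ ≤ α)
    (hα : α < Omega1.{u}) : RawLE (F σ y γ) (F σ y α) := by
  rcases hγα.lt_or_eq with h | rfl
  · exact (stages hσ y α hα).2 γ h
  · exact RawLE.refl _

end

end PSG
noncomputable section
universe u
open Ordinal Cardinal Set
namespace PSG

lemma snd_eq {s t : RawS.{u}} (e : s = t) {δ : Ordinal.{u}} (hs : δ < s.1) (ht : δ < t.1) :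
    s.2 ⟨δ, hs⟩ = t.2 ⟨δ, ht⟩ := by subst e; rfl

variable {σ : GState.{u} → GState.{u}}

/-- Position of Player II's bit in round `α`. -/
def Lfun (hσ : GLegal σ) (y : OSeq Omega1.{u}) (α : Set.Iio Omega1.{u}) :
    Set.Iio Omega1.{u} :=
  (σ (toG (F σ y α.val) (lenF_lt hσ y (Set.mem_Iio.mp α.2)))).1

/-- The full play against `y`. -/
def xseq (hσ : GLegal σ) (y : OSeq Omega1.{u}) : OSeq Omega1.{u} := fun δ =>
  (F σ y (δ.val + 1)).2 ⟨δ.val,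
    lt_of_lt_of_le (lt_add_one _) (le_lenF hσ y (succ_lt_omega1 (Set.mem_Iio.mp δ.2)))⟩

lemma F_succ_eq (hσ : GLegal σ) (y : OSeq Omega1.{u}) {γ : Ordinal.{u}}
    (hγ : γ < Omega1.{u}) :
    F σ y (γ + 1) = pushRaw (σ (toG (F σ y γ) (lenF_lt hσ y hγ))) y := by
  rw [add_one_eq_succ, F_succ]
  unfold succH
  have hc : (F σ y γ).1 < Omega1.{u} := lenF_lt hσ y hγ
  rw [dif_pos hc]

lemma lenF_succ (hσ : GLegal σ) (y : OSeq Omega1.{u}) {γ : Ordinal.{u}}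
    (hγ : γ < Omega1.{u}) :
    lenF (σ := σ) y (γ + 1) = (Lfun hσ y ⟨γ, hγ⟩).val + 1 := by
  show (F σ y (γ + 1)).1 = _
  rw [F_succ_eq hσ y hγ]
  rfl

/-- `xseq` agrees with every stage of the play. -/
lemma xseq_agree (hσ : GLegal σ) (y : OSeq Omega1.{u}) {α : Ordinal.{u}}
    (hα : α < Omega1.{u}) (δ : Set.Iio Omega1.{u}) (hδ : δ.val < lenF (σ := σ) y α) :
    xseq hσ y δ = (F σ y α).2 ⟨δ.val, hδ⟩ := by
  rcases le_total (δ.val + 1) α with hle | hle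
  · obtain ⟨h1, h2⟩ := F_mono hσ y hle hα
    have := h2 δ.val (lt_of_lt_of_le (lt_add_one _)
      (le_lenF hσ y (succ_lt_omega1 (Set.mem_Iio.mp δ.2))))
    exact this
  · obtain ⟨h1, h2⟩ := F_mono hσ y hle (succ_lt_omega1 (Set.mem_Iio.mp δ.2))
    exact (h2 δ.val hδ).symm

lemma pushRaw_last (t : GState.{u}) (y : OSeq Omega1.{u})
    {δ : Ordinal.{u}} (hδ : δ < (pushRaw t y).1) (he : δ = t.1.val) :
    (pushRaw t y).2 ⟨δ, hδ⟩ = y t.1 := by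
  subst he
  show dite _ _ _ = _
  rw [dif_neg]
  exact lt_irrefl _

lemma pushRaw_lt (t : GState.{u}) (y : OSeq Omega1.{u})
    {δ : Ordinal.{u}} (hδ : δ < (pushRaw t y).1) (hlt : δ < t.1.val) :
    (pushRaw t y).2 ⟨δ, hδ⟩ = t.2 ⟨δ, hlt⟩ := by
  show dite _ _ _ = _
  rw [dif_pos hlt]

/-- Player II's bit in round `γ` is `y` at the bit's position. -/
lemma xseq_bit (hσ : GLegal σ) (y : OSeq Omega1.{u}) (γ : Set.Iio Omega1.{u}) :
    xseq hσ y (Lfun hσ y γ) = y (Lfun hσ y γ) := by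
  have hγ := Set.mem_Iio.mp γ.2
  set t := σ (toG (F σ y γ.val) (lenF_lt hσ y hγ)) with ht
  have hF : F σ y (γ.val + 1) = pushRaw t y := F_succ_eq hσ y hγ
  have hδ : (Lfun hσ y γ).val < lenF (σ := σ) y (γ.val + 1) := by
    rw [lenF_succ hσ y hγ]; exact lt_add_one _
  have hδ2 : (Lfun hσ y γ).val < (pushRaw t y).1 := lt_add_one _
  rw [xseq_agree hσ y (succ_lt_omega1 hγ) (Lfun hσ y γ) hδ,
    snd_eq hF hδ hδ2, pushRaw_last t y hδ2 rfl]
  rfl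

/-- Below the bit position, the play follows Player I's extension. -/
lemma xseq_sigma_part (hσ : GLegal σ) (y : OSeq Omega1.{u}) (γ : Set.Iio Omega1.{u})
    {δ : Ordinal.{u}} (hδ : δ < (Lfun hσ y γ).val) (hδ' : δ < Omega1.{u}) :
    xseq hσ y ⟨δ, hδ'⟩ =
      (σ (toG (F σ y γ.val) (lenF_lt hσ y (Set.mem_Iio.mp γ.2)))).2 ⟨δ, hδ⟩ := by
  have hγ := Set.mem_Iio.mp γ.2
  set t := σ (toG (F σ y γ.val) (lenF_lt hσ y hγ)) with ht
  have hF : F σ y (γ.val + 1) = pushRaw t y := F_succ_eq hσ y hγ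
  have hδl : δ < lenF (σ := σ) y (γ.val + 1) := by
    rw [lenF_succ hσ y hγ]; exact hδ.trans (lt_add_one _)
  have hδ2 : δ < (pushRaw t y).1 := hδ.trans (lt_add_one _)
  rw [xseq_agree hσ y (succ_lt_omega1 hγ) ⟨δ, hδ'⟩ hδl,
    snd_eq hF hδl hδ2, pushRaw_lt t y hδ2 hδ]

lemma lenF_le_Lfun (hσ : GLegal σ) (y : OSeq Omega1.{u}) (γ : Set.Iio Omega1.{u}) :
    lenF (σ := σ) y γ.val ≤ (Lfun hσ y γ).val :=
  (hσ (toG (F σ y γ.val) (lenF_lt hσ y (Set.mem_Iio.mp γ.2)))).choose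

lemma toG_eq_gStateAt (hσ : GLegal σ) (y : OSeq Omega1.{u}) {α : Ordinal.{u}}
    (hα : α < Omega1.{u}) (h : lenF (σ := σ) y α < Omega1.{u}) :
    toG (F σ y α) h = gStateAt (xseq hσ y) ⟨lenF (σ := σ) y α, h⟩ := by
  unfold toG gStateAt
  have : (F σ y α).2 = resSeq (le_of_lt h) (xseq hσ y) := by
    funext δ
    have hδ := Set.mem_Iio.mp δ.2
    exact (xseq_agree hσ y hα ⟨δ.val, lt_trans hδ h⟩ hδ).symm
  exact congrArg (Sigma.mk _) this

lemma prevLen_eq (hσ : GLegal σ) (y : OSeq Omega1.{u}) (α : Set.Iio Omega1.{u}) :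
    prevLen (Lfun hσ y) α = lenF (σ := σ) y α.val := by
  have hα := Set.mem_Iio.mp α.2
  unfold prevLen
  have hterm : ∀ γ : Set.Iio α.val,
      (Lfun hσ y ⟨γ.val, Set.mem_Iio.mpr
        (lt_trans (Set.mem_Iio.mp γ.2) hα)⟩).val + 1
        = lenF (σ := σ) y (γ.val + 1) :=
    fun γ => (lenF_succ hσ y (lt_trans (Set.mem_Iio.mp γ.2) hα)).symm
  have hbdd : BddAbove (Set.range fun γ : Set.Iio α.val =>
      (Lfun hσ y ⟨γ.val, Set.mem_Iio.mpr (lt_trans (Set.mem_Iio.mp γ.2) hα)⟩).val + 1) := by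
    refine ⟨Omega1.{u}, ?_⟩
    rintro x ⟨γ, rfl⟩
    exact le_of_lt (succ_lt_omega1 (Set.mem_Iio.mp (Lfun hσ y _).2))
  apply le_antisymm
  · rcases eq_or_ne α.val 0 with h0 | h0
    · have : IsEmpty (Set.Iio α.val) := by
        rw [h0]; exact ⟨fun x => not_lt_zero (Set.mem_Iio.mp x.2)⟩
      rw [ciSup_of_empty]
      exact zero_le
    · have : Nonempty (Set.Iio α.val) :=
        ⟨⟨0, Set.mem_Iio.mpr (pos_iff_ne_zero.mpr h0)⟩⟩
      refine ciSup_le fun γ => ?_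
      rw [hterm γ]
      have hle : γ.val + 1 ≤ α.val := by
        rw [add_one_eq_succ]; exact Order.succ_le_of_lt (Set.mem_Iio.mp γ.2)
      exact (F_mono hσ y hle hα).choose
  · rcases Ordinal.zero_or_succ_or_isSuccLimit α.val with h0 | ⟨γ0, hs⟩ | hlim
    · rw [show lenF (σ := σ) y α.val = 0 by rw [h0]; show (F σ y 0).1 = 0; rw [F_zero]]
      exact zero_le
    · have hγ0 : γ0 < α.val := by rw [← hs]; exact Order.lt_succ γ0
      have he : α.val = γ0 + 1 := by rw [add_one_eq_succ]; exact hs.symm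
      have h2 : lenF (σ := σ) y α.val = lenF (σ := σ) y (γ0 + 1) := by rw [he]
      rw [h2, ← hterm ⟨γ0, Set.mem_Iio.mpr hγ0⟩]
      exact le_ciSup hbdd ⟨γ0, Set.mem_Iio.mpr hγ0⟩
    · have hF := F_lim σ y hlim
      have h2 : lenF (σ := σ) y α.val
          = Ordinal.bsup.{u,u} α.val (fun γ _ => lenF (σ := σ) y γ) := by
        show (F σ y α.val).1 = _
        rw [hF]; rfl
      rw [h2]
      rw [Ordinal.bsup_le_iff]
      intro γ hγ
      have h1 : lenF (σ := σ) y γ ≤ lenF (σ := σ) y (γ + 1) :=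
        (F_mono hσ y (le_of_lt (lt_add_one γ)) (succ_lt_omega1 (lt_trans hγ hα))).choose
      refine h1.trans ?_
      rw [← hterm ⟨γ, Set.mem_Iio.mpr hγ⟩]
      exact le_ciSup hbdd ⟨γ, Set.mem_Iio.mpr hγ⟩

end PSG
end
noncomputable section
universe u
open Ordinal Cardinal Set
namespace PSG

variable {σ : GState.{u} → GState.{u}}

lemma pushRaw_congr {t : GState.{u}} {y y' : OSeq Omega1.{u}} (hb : y t.1 = y' t.1) :
    pushRaw t y = pushRaw t y' := by
  unfold pushRaw
  refine congrArg (Sigma.mk _) ?_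
  funext δ
  by_cases h : δ.val < t.1.val
  · rw [dif_pos h, dif_pos h]
  · rw [dif_neg h, dif_neg h]; exact hb

lemma Lfun_congr (hσ : GLegal σ) {y y' : OSeq Omega1.{u}} (γ : Set.Iio Omega1.{u})
    (e : F σ y γ.val = F σ y' γ.val) : Lfun hσ y γ = Lfun hσ y' γ :=
  congrArg (fun s => s.1) (congrArg σ (toG_congr e))

lemma F_succ_congr (hσ : GLegal σ) {y y' : OSeq Omega1.{u}} {γ : Ordinal.{u}}
    (hγ : γ < Omega1.{u}) (e : F σ y γ = F σ y' γ)
    (hb : y (Lfun hσ y ⟨γ, hγ⟩) = y' (Lfun hσ y ⟨γ, hγ⟩)) :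
    F σ y (γ + 1) = F σ y' (γ + 1) := by
  rw [F_succ_eq hσ y hγ, F_succ_eq hσ y' hγ]
  have e2 : σ (toG (F σ y γ) (lenF_lt hσ y hγ)) = σ (toG (F σ y' γ) (lenF_lt hσ y' hγ)) :=
    congrArg σ (toG_congr e)
  rw [← e2]
  exact pushRaw_congr hb

lemma F_lim_congr {y y' : OSeq Omega1.{u}} {α : Ordinal.{u}} (hlim : Order.IsSuccLimit α)
    (e : ∀ γ < α, F σ y γ = F σ y' γ) : F σ y α = F σ y' α := by
  rw [F_lim σ y hlim, F_lim σ y' hlim]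
  exact congrArg (limH α) (funext fun γ => funext fun hγ => e γ hγ)

/-- Coherence: the play depends only on `y` at the bit positions of earlier rounds. -/
lemma F_coh (hσ : GLegal σ) {y y' : OSeq Omega1.{u}} :
    ∀ α, α < Omega1.{u} →
      (∀ γ : Set.Iio Omega1.{u}, γ.val < α → y (Lfun hσ y γ) = y' (Lfun hσ y γ)) →
      F σ y α = F σ y' α := by
  intro α
  induction α using Ordinal.induction with
  | _ α IH =>
  intro hα hyp
  rcases Ordinal.zero_or_succ_or_isSuccLimit α with h0 | ⟨γ, hs⟩ | hlim
  · subst h0; rw [F_zero, F_zero]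
  · have hα1 : α = γ + 1 := by rw [add_one_eq_succ]; exact hs.symm
    subst hα1
    have hγω : γ < Omega1.{u} := lt_of_lt_of_le (lt_add_one γ) (le_of_lt hα)
    have e : F σ y γ = F σ y' γ :=
      IH γ (lt_add_one γ) hγω fun δ hδ => hyp δ (hδ.trans (lt_add_one γ))
    exact F_succ_congr hσ hγω e (hyp ⟨γ, Set.mem_Iio.mpr hγω⟩ (lt_add_one γ))
  · exact F_lim_congr hlim fun γ hγ =>
      IH γ hγ (hγ.trans hα) fun δ hδ => hyp δ (hδ.trans hγ)

/-- Injectivity: the play stages are determined by the resulting sequence. -/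
lemma F_inj (hσ : GLegal σ) {y y' : OSeq Omega1.{u}} :
    ∀ α, α < Omega1.{u} →
      (∀ δ : Set.Iio Omega1.{u}, δ.val < lenF (σ := σ) y α →
        xseq hσ y δ = xseq hσ y' δ) →
      F σ y α = F σ y' α := by
  intro α
  induction α using Ordinal.induction with
  | _ α IH =>
  intro hα hyp
  rcases Ordinal.zero_or_succ_or_isSuccLimit α with h0 | ⟨γ, hs⟩ | hlim
  · subst h0; rw [F_zero, F_zero]
  · have hα1 : α = γ + 1 := by rw [add_one_eq_succ]; exact hs.symm
    subst hα1
    have hγω : γ < Omega1.{u} := lt_of_lt_of_le (lt_add_one γ) (le_of_lt hα)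
    have hlen : lenF (σ := σ) y γ ≤ lenF (σ := σ) y (γ + 1) :=
      (F_mono hσ y (le_of_lt (lt_add_one γ)) hα).choose
    have e : F σ y γ = F σ y' γ :=
      IH γ (lt_add_one γ) hγω fun δ hδ => hyp δ (lt_of_lt_of_le hδ hlen)
    refine F_succ_congr hσ hγω e ?_
    set γs : Set.Iio Omega1.{u} := ⟨γ, Set.mem_Iio.mpr hγω⟩ with hγs
    have hL : (Lfun hσ y γs).val < lenF (σ := σ) y (γ + 1) := by
      rw [lenF_succ hσ y hγω]; exact lt_add_one _
    calc y (Lfun hσ y γs) = xseq hσ y (Lfun hσ y γs) := (xseq_bit hσ y γs).symm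
      _ = xseq hσ y' (Lfun hσ y γs) := hyp _ hL
      _ = xseq hσ y' (Lfun hσ y' γs) := by rw [Lfun_congr hσ γs e]
      _ = y' (Lfun hσ y' γs) := xseq_bit hσ y' γs
      _ = y' (Lfun hσ y γs) := by rw [Lfun_congr hσ γs e]
  · refine F_lim_congr hlim fun γ hγ => IH γ hγ (hγ.trans hα) fun δ hδ => ?_
    have : lenF (σ := σ) y γ ≤ lenF (σ := σ) y α := (F_mono hσ y (le_of_lt hγ) hα).choose
    exact hyp δ (lt_of_lt_of_le hδ this)

lemma validL (hσ : GLegal σ) (y : OSeq Omega1.{u}) : ValidL (Lfun hσ y) := by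
  intro γ α hlt
  have hγ1 : γ.val + 1 ≤ α.val := by
    rw [add_one_eq_succ]; exact Order.succ_le_of_lt hlt
  have hαω := Set.mem_Iio.mp α.2
  calc (Lfun hσ y γ).val < (Lfun hσ y γ).val + 1 := lt_add_one _
    _ = lenF (σ := σ) y (γ.val + 1) := (lenF_succ hσ y (Set.mem_Iio.mp γ.2)).symm
    _ ≤ lenF (σ := σ) y α.val := (F_mono hσ y hγ1 hαω).choose
    _ ≤ (Lfun hσ y α).val := lenF_le_Lfun hσ y α

lemma consI (hσ : GLegal σ) (y : OSeq Omega1.{u}) :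
    GConsI σ (xseq hσ y) (Lfun hσ y) := by
  intro α h
  have hp : prevLen (Lfun hσ y) α = lenF (σ := σ) y α.val := prevLen_eq hσ y α
  have hαω := Set.mem_Iio.mp α.2
  have hlω : lenF (σ := σ) y α.val < Omega1.{u} := lenF_lt hσ y hαω
  have hsub : (⟨prevLen (Lfun hσ y) α, Set.mem_Iio.mpr h⟩ : Set.Iio Omega1.{u})
      = ⟨lenF (σ := σ) y α.val, Set.mem_Iio.mpr hlω⟩ := Subtype.ext hp
  rw [hsub, ← toG_eq_gStateAt hσ y hαω hlω]
  set t := σ (toG (F σ y α.val) hlω) with ht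
  have h2 : resSeq (le_of_lt (Set.mem_Iio.mp t.1.2)) (xseq hσ y) = t.2 := by
    funext δ
    exact xseq_sigma_part hσ y α (Set.mem_Iio.mp δ.2) _
  show t = gStateAt (xseq hσ y) (Lfun hσ y α)
  have h3 : gStateAt (xseq hσ y) (Lfun hσ y α) = ⟨t.1, t.2⟩ := by
    unfold gStateAt
    exact congrArg (Sigma.mk t.1) h2
  rw [h3]
  rfl

end PSG
end
noncomputable section
universe u
open Ordinal Cardinal Set
namespace PSG

variable {σ : GState.{u} → GState.{u}}

lemma snd_eqG {s t : GState.{u}} (e : s = t) {δ : Ordinal.{u}}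
    (hs : δ < s.1.val) (ht : δ < t.1.val) :
    s.2 ⟨δ, hs⟩ = t.2 ⟨δ, ht⟩ := by subst e; rfl

/-- The perfect tree: all initial segments of plays following `σ`. -/
def Tset (hσ : GLegal σ) : Set GState.{u} := { s | ∃ y, SegOf s (xseq hσ y) }

lemma Tset_isTree (hσ : GLegal σ) : IsTree (Tset hσ) := by
  intro β s hs γ hle
  obtain ⟨y, hy⟩ := hs
  refine ⟨y, ?_⟩
  funext δ
  exact congrFun hy ⟨δ.val, lt_of_lt_of_le (Set.mem_Iio.mp δ.2) hle⟩

lemma lenF_zero (y : OSeq Omega1.{u}) : lenF (σ := σ) y 0 = 0 := by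
  show (F σ y 0).1 = 0; rw [F_zero]

lemma lenF_lim (y : OSeq Omega1.{u}) {α : Ordinal.{u}} (hlim : Order.IsSuccLimit α) :
    lenF (σ := σ) y α = Ordinal.bsup.{u,u} α (fun γ _ => lenF (σ := σ) y γ) := by
  show (F σ y α).1 = _; rw [F_lim σ y hlim]; rfl

/-- Every path through the tree agrees with the play against itself. -/
lemma path_agree (hσ : GLegal σ) {f : OSeq Omega1.{u}} (hf : IsPath (Tset hσ) f) :
    ∀ α, α < Omega1.{u} → ∀ δ : Set.Iio Omega1.{u}, δ.val < lenF (σ := σ) f α →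
      f δ = xseq hσ f δ := by
  intro α
  induction α using Ordinal.induction with
  | _ α IH =>
  intro hα δ hδ
  rcases Ordinal.zero_or_succ_or_isSuccLimit α with h0 | ⟨γ, hs⟩ | hlim
  · rw [h0, lenF_zero] at hδ
    exact absurd hδ not_lt_zero
  · have hα1 : α = γ + 1 := by rw [add_one_eq_succ]; exact hs.symm
    subst hα1
    have hγω : γ < Omega1.{u} := lt_of_lt_of_le (lt_add_one γ) (le_of_lt hα)
    set γs : Set.Iio Omega1.{u} := ⟨γ, Set.mem_Iio.mpr hγω⟩ with hγs
    set L := Lfun hσ f γs with hL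
    have hδL : δ.val ≤ L.val := by
      rw [lenF_succ hσ f hγω, add_one_eq_succ, Order.lt_succ_iff] at hδ
      exact hδ
    rcases hδL.lt_or_eq with hlt | heq
    · -- inside Player I's extension
      have hLω : L.val + 1 < Omega1.{u} := succ_lt_omega1 (Set.mem_Iio.mp L.2)
      obtain ⟨y', hy'⟩ := hf ⟨L.val + 1, Set.mem_Iio.mpr hLω⟩
      have hpt : ∀ (ε : Set.Iio Omega1.{u}), ε.val < L.val + 1 →
          f ε = xseq hσ y' ε := by
        intro ε hε
        exact congrFun hy' ⟨ε.val, hε⟩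
      have hlenL : lenF (σ := σ) f γ ≤ L.val := lenF_le_Lfun hσ f γs
      have e : F σ f γ = F σ y' γ := by
        refine F_inj hσ γ hγω fun ε hε => ?_
        rw [← IH γ (lt_add_one γ) hγω ε hε]
        exact hpt ε (lt_of_le_of_lt (le_of_lt (lt_of_lt_of_le hε hlenL)) (lt_add_one _))
      have hLe : Lfun hσ y' γs = L := (Lfun_congr hσ γs e).symm
      have hδ'' : δ.val < (Lfun hσ y' γs).val := by rw [hLe]; exact hlt
      have h1 : f δ = xseq hσ y' δ := hpt δ (lt_of_le_of_lt hδL (lt_add_one _))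
      have h2 := xseq_sigma_part hσ y' γs hδ'' (Set.mem_Iio.mp δ.2)
      have h3 := xseq_sigma_part hσ f γs hlt (Set.mem_Iio.mp δ.2)
      have e2 : σ (toG (F σ y' γs.val) (lenF_lt hσ y' (Set.mem_Iio.mp γs.2)))
          = σ (toG (F σ f γs.val) (lenF_lt hσ f (Set.mem_Iio.mp γs.2))) :=
        congrArg σ (toG_congr e.symm)
      have h4 := snd_eqG e2 hδ'' hlt
      rw [h1]
      show xseq hσ y' δ = xseq hσ f δ
      rw [show δ = (⟨δ.val, Set.mem_Iio.mpr (Set.mem_Iio.mp δ.2)⟩ : Set.Iio Omega1.{u})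
        from Subtype.ext rfl]
      rw [h2, h3, h4]
    · have hde : δ = L := Subtype.ext heq
      rw [hde]
      exact (xseq_bit hσ f γs).symm
  · rw [lenF_lim f hlim] at hδ
    obtain ⟨γ, hγ, hδγ⟩ := (Ordinal.lt_bsup _).1 hδ
    exact IH γ hγ (hγ.trans hα) δ hδγ

lemma path_eq (hσ : GLegal σ) {f : OSeq Omega1.{u}} (hf : IsPath (Tset hσ) f) :
    f = xseq hσ f := by
  funext δ
  have hδω := Set.mem_Iio.mp δ.2
  exact path_agree hσ hf (δ.val + 1) (succ_lt_omega1 hδω) δ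
    (lt_of_lt_of_le (lt_add_one _) (le_lenF hσ f (succ_lt_omega1 hδω)))

lemma paths_in_X (hσ : GLegal σ) {X : Set (OSeq Omega1.{u})}
    (hwin : ∀ (x : OSeq Omega1.{u}) (L : Set.Iio Omega1.{u} → Set.Iio Omega1.{u}),
      ValidL L → GConsI σ x L → x ∈ X)
    (f : OSeq Omega1.{u}) (hf : IsPath (Tset hσ) f) : f ∈ X := by
  rw [path_eq hσ hf]
  exact hwin (xseq hσ f) (Lfun hσ f) (validL hσ f) (consI hσ f)

lemma xseq_isPath (hσ : GLegal σ) (y : OSeq Omega1.{u}) :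
    IsPath (Tset hσ) (xseq hσ y) := fun β => ⟨y, rfl⟩

end PSG
end
noncomputable section
universe u
open Ordinal Cardinal Set
namespace PSG

variable {σ : GState.{u} → GState.{u}}

section Chain

variable (hσ : GLegal σ) {C : Set GState.{u}}

open scoped Classical in
/-- The "union" of a chain, extended by `false`. -/
def ystar (C : Set GState.{u}) : OSeq Omega1.{u} := fun δ =>
  if h : ∃ s, s ∈ C ∧ δ.val < s.1.val then
    (Classical.choose h).2 ⟨δ.val, (Classical.choose_spec h).2⟩
  else false

lemma hcov (hC : IsChain SegLE C) {s : GState.{u}} (hs : s ∈ C) (δ : Set.Iio Omega1.{u})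
    (hδ : δ.val < s.1.val) : ystar C δ = s.2 ⟨δ.val, hδ⟩ := by
  have hex : ∃ t, t ∈ C ∧ δ.val < t.1.val := ⟨s, hs, hδ⟩
  unfold ystar
  rw [dif_pos hex]
  set t := Classical.choose hex with htdef
  have htC : t ∈ C := (Classical.choose_spec hex).1
  have htδ : δ.val < t.1.val := (Classical.choose_spec hex).2
  rcases eq_or_ne t s with e | hne
  · exact snd_eqG e htδ hδ
  · rcases hC htC hs hne with ⟨hle, heq⟩ | ⟨hle, heq⟩
    · exact congrFun heq ⟨δ.val, htδ⟩
    · exact (congrFun heq ⟨δ.val, hδ⟩).symm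

lemma chain_R (hC : IsChain SegLE C) {s : GState.{u}} (hs : s ∈ C) {ys : OSeq Omega1.{u}}
    (hys : s.2 = resSeq (le_of_lt (Set.mem_Iio.mp s.1.2)) (xseq hσ ys)) :
    ∀ α, α < Omega1.{u} → lenF (σ := σ) (ystar C) α ≤ s.1.val →
      F σ (ystar C) α = F σ ys α := by
  intro α
  induction α using Ordinal.induction with
  | _ α IH =>
  intro hα hlen
  rcases Ordinal.zero_or_succ_or_isSuccLimit α with h0 | ⟨γ, hsc⟩ | hlim
  · subst h0; rw [F_zero, F_zero]
  · have hα1 : α = γ + 1 := by rw [add_one_eq_succ]; exact hsc.symm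
    subst hα1
    have hγω : γ < Omega1.{u} := lt_of_lt_of_le (lt_add_one γ) (le_of_lt hα)
    have hmono : lenF (σ := σ) (ystar C) γ ≤ lenF (σ := σ) (ystar C) (γ + 1) :=
      (F_mono hσ (ystar C) (le_of_lt (lt_add_one γ)) hα).choose
    have e : F σ (ystar C) γ = F σ ys γ := IH γ (lt_add_one γ) hγω (hmono.trans hlen)
    refine F_succ_congr hσ hγω e ?_
    set γs : Set.Iio Omega1.{u} := ⟨γ, Set.mem_Iio.mpr hγω⟩ with hγs
    set L := Lfun hσ (ystar C) γs with hLdef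
    have hLs : L.val < lenF (σ := σ) (ystar C) (γ + 1) := by
      rw [lenF_succ hσ (ystar C) hγω]; exact lt_add_one _
    have hLss : L.val < s.1.val := lt_of_lt_of_le hLs hlen
    have h1 : ystar C L = s.2 ⟨L.val, hLss⟩ := hcov hC hs L hLss
    have h2 : s.2 ⟨L.val, hLss⟩ = xseq hσ ys L := congrFun hys ⟨L.val, hLss⟩
    have hLys : Lfun hσ ys γs = L := (Lfun_congr hσ γs e).symm
    calc ystar C L = xseq hσ ys L := h1.trans h2
      _ = xseq hσ ys (Lfun hσ ys γs) := by rw [hLys]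
      _ = ys (Lfun hσ ys γs) := xseq_bit hσ ys γs
      _ = ys L := by rw [hLys]
  · refine F_lim_congr hlim fun γ hγ => IH γ hγ (hγ.trans hα) ?_
    exact ((F_mono hσ (ystar C) (le_of_lt hγ) hα).choose).trans hlen

lemma chain_S (hC : IsChain SegLE C) {s : GState.{u}} (hs : s ∈ C) {ys : OSeq Omega1.{u}}
    (hys : s.2 = resSeq (le_of_lt (Set.mem_Iio.mp s.1.2)) (xseq hσ ys)) :
    ∀ α, α < Omega1.{u} → ∀ δ : Set.Iio Omega1.{u},
      δ.val < lenF (σ := σ) (ystar C) α → ∀ hδs : δ.val < s.1.val,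
      xseq hσ (ystar C) δ = s.2 ⟨δ.val, hδs⟩ := by
  intro α
  induction α using Ordinal.induction with
  | _ α IH =>
  intro hα δ hδα hδs
  rcases Ordinal.zero_or_succ_or_isSuccLimit α with h0 | ⟨γ, hsc⟩ | hlim
  · rw [h0, lenF_zero] at hδα
    exact absurd hδα not_lt_zero
  · have hα1 : α = γ + 1 := by rw [add_one_eq_succ]; exact hsc.symm
    subst hα1
    have hγω : γ < Omega1.{u} := lt_of_lt_of_le (lt_add_one γ) (le_of_lt hα)
    by_cases hprev : δ.val < lenF (σ := σ) (ystar C) γ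
    · exact IH γ (lt_add_one γ) hγω δ hprev hδs
    · have hlenδ : lenF (σ := σ) (ystar C) γ ≤ δ.val := le_of_not_gt hprev
      have hR : F σ (ystar C) γ = F σ ys γ :=
        chain_R hσ hC hs hys γ hγω (hlenδ.trans (le_of_lt hδs))
      set γs : Set.Iio Omega1.{u} := ⟨γ, Set.mem_Iio.mpr hγω⟩ with hγs
      set L := Lfun hσ (ystar C) γs with hLdef
      have hδL : δ.val ≤ L.val := by
        rw [lenF_succ hσ (ystar C) hγω, add_one_eq_succ, Order.lt_succ_iff] at hδα
        exact hδα
      have hLys : Lfun hσ ys γs = L := (Lfun_congr hσ γs hR).symm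
      rcases hδL.lt_or_eq with hlt | heq
      · have h3 := xseq_sigma_part hσ (ystar C) γs hlt (Set.mem_Iio.mp δ.2)
        have hδ'' : δ.val < (Lfun hσ ys γs).val := by rw [hLys]; exact hlt
        have h2 := xseq_sigma_part hσ ys γs hδ'' (Set.mem_Iio.mp δ.2)
        have e2 : σ (toG (F σ (ystar C) γs.val) (lenF_lt hσ (ystar C) (Set.mem_Iio.mp γs.2)))
            = σ (toG (F σ ys γs.val) (lenF_lt hσ ys (Set.mem_Iio.mp γs.2))) :=
          congrArg σ (toG_congr hR)
        have h4 := snd_eqG e2 hlt hδ''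
        have h5 : s.2 ⟨δ.val, hδs⟩ = xseq hσ ys δ := congrFun hys ⟨δ.val, hδs⟩
        rw [h5]
        rw [show δ = (⟨δ.val, Set.mem_Iio.mpr (Set.mem_Iio.mp δ.2)⟩ : Set.Iio Omega1.{u})
          from Subtype.ext rfl]
        rw [h2, h3]
        exact h4
      · have hde : δ = L := Subtype.ext heq
        rw [← hcov hC hs δ hδs, hde]
        exact xseq_bit hσ (ystar C) γs
  · rw [lenF_lim (ystar C) hlim] at hδα
    obtain ⟨γ, hγ, hδγ⟩ := (Ordinal.lt_bsup _).1 hδα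
    exact IH γ hγ (hγ.trans hα) δ hδγ hδs

lemma chain_extends (hCT : C ⊆ Tset hσ) (hC : IsChain SegLE C) : ∃ f : OSeq Omega1.{u},
    IsPath (Tset hσ) f ∧ ∀ s ∈ C, SegOf s f := by
  refine ⟨xseq hσ (ystar C), xseq_isPath hσ (ystar C), ?_⟩
  intro s hs
  obtain ⟨ys, hys⟩ := hCT hs
  show s.2 = _
  funext δ
  have hδs : δ.val < s.1.val := Set.mem_Iio.mp δ.2
  have hδω : δ.val < Omega1.{u} := lt_trans hδs (Set.mem_Iio.mp s.1.2)
  have hδα : δ.val < lenF (σ := σ) (ystar C) (δ.val + 1) :=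
    lt_of_lt_of_le (lt_add_one _) (le_lenF hσ (ystar C) (succ_lt_omega1 hδω))
  exact (chain_S hσ hC hs hys (δ.val + 1) (succ_lt_omega1 hδω)
    ⟨δ.val, Set.mem_Iio.mpr hδω⟩ hδα hδs).symm

end Chain

end PSG
end
noncomputable section
universe u
open Ordinal Cardinal Set
namespace PSG

variable {σ : GState.{u} → GState.{u}}

open scoped Classical in
lemma branchesAt_Lfun (hσ : GLegal σ) {f : OSeq Omega1.{u}} (hf : IsPath (Tset hσ) f)
    (γs : Set.Iio Omega1.{u}) : BranchesAt (Tset hσ) f (Lfun hσ f γs) := by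
  intro hlt b
  have hfe : f = xseq hσ f := path_eq hσ hf
  set p := Lfun hσ f γs with hp
  set yb : OSeq Omega1.{u} := fun δ => if δ = p then b else f δ with hyb
  have e : F σ f γs.val = F σ yb γs.val := by
    refine F_coh hσ γs.val (Set.mem_Iio.mp γs.2) fun γ' hγ' => ?_
    have hne : Lfun hσ f γ' ≠ p := by
      intro hcon
      have := validL hσ f γ' γs hγ'
      rw [hcon] at this
      exact lt_irrefl _ this
    show f (Lfun hσ f γ') = yb (Lfun hσ f γ')
    rw [hyb]
    simp only [if_neg hne]
  have hLb : Lfun hσ yb γs = p := (Lfun_congr hσ γs e).symm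
  refine ⟨yb, ?_⟩
  show extSeq f p b = _
  funext δ
  have hδp1 : δ.val < p.val + 1 := Set.mem_Iio.mp δ.2
  have hδω : δ.val < Omega1.{u} := lt_trans hδp1 hlt
  show dite _ _ _ = resSeq _ (xseq hσ yb) δ
  by_cases hc : δ.val < p.val
  · rw [dif_pos hc]
    have hδ'' : δ.val < (Lfun hσ yb γs).val := by rw [hLb]; exact hc
    have h2 := xseq_sigma_part hσ yb γs hδ'' hδω
    have h3 := xseq_sigma_part hσ f γs hc hδω
    have e2 : σ (toG (F σ yb γs.val) (lenF_lt hσ yb (Set.mem_Iio.mp γs.2)))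
        = σ (toG (F σ f γs.val) (lenF_lt hσ f (Set.mem_Iio.mp γs.2))) :=
      congrArg σ (toG_congr e.symm)
    have h4 := snd_eqG e2 hδ'' hc
    show f ⟨δ.val, _⟩ = xseq hσ yb ⟨δ.val, hδω⟩
    rw [h2, h4, ← h3]
    exact congrFun hfe ⟨δ.val, hδω⟩
  · rw [dif_neg hc]
    have hδle : δ.val ≤ p.val :=
      Order.lt_succ_iff.mp (by rw [← Ordinal.add_one_eq_succ]; exact hδp1)
    have heq : δ.val = p.val := by
      rcases lt_or_eq_of_le hδle with h | h
      · exact absurd h hc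
      · exact h
    show b = xseq hσ yb ⟨δ.val, hδω⟩
    have hsub : (⟨δ.val, Set.mem_Iio.mpr hδω⟩ : Set.Iio Omega1.{u}) = p := Subtype.ext heq
    rw [hsub, ← hLb, xseq_bit hσ yb γs, hLb]
    show b = if p = p then b else f p
    rw [if_pos rfl]

lemma Lfun_injective (hσ : GLegal σ) (y : OSeq Omega1.{u}) :
    Function.Injective (Lfun hσ y) := by
  intro a b hab
  by_contra hne
  rcases lt_trichotomy a.val b.val with h | h | h
  · have := validL hσ y a b h
    rw [hab] at this
    exact lt_irrefl _ this
  · exact hne (Subtype.ext h)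
  · have := validL hσ y b a h
    rw [hab] at this
    exact lt_irrefl _ this

lemma mk_Iio_omega1 : #(Set.Iio Omega1.{u}) = Cardinal.lift.{u+1, u} (Cardinal.aleph 1) := by
  rw [Ordinal.mk_Iio_ordinal]
  congr 1
  exact Cardinal.card_ord _

lemma branch_card (hσ : GLegal σ) {f : OSeq Omega1.{u}} (hf : IsPath (Tset hσ) f) :
    #{β : Set.Iio Omega1.{u} // BranchesAt (Tset hσ) f β}
      = Cardinal.lift.{u+1, u} (Cardinal.aleph 1) := by
  apply le_antisymm
  · calc #{β : Set.Iio Omega1.{u} // BranchesAt (Tset hσ) f β}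
        ≤ #(Set.Iio Omega1.{u}) :=
          Cardinal.mk_le_of_injective (f := fun x => x.val) Subtype.coe_injective
      _ = _ := mk_Iio_omega1
  · rw [← mk_Iio_omega1]
    refine Cardinal.mk_le_of_injective
      (f := fun γs => (⟨Lfun hσ f γs, branchesAt_Lfun hσ hf γs⟩ :
        {β : Set.Iio Omega1.{u} // BranchesAt (Tset hσ) f β})) ?_
    intro a b hab
    exact Lfun_injective hσ f (congrArg Subtype.val hab)

end PSG
end
noncomputable section
universe u v
open Ordinal Cardinal Set
namespace PSG

lemma lift_omega1 : Ordinal.lift.{v, u} Omega1.{u} = Omega1.{max u v} := by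
  unfold Omega1
  rw [Cardinal.lift_ord, Cardinal.lift_aleph, Ordinal.lift_one]

lemma downAux (α : Set.Iio Omega1.{v}) :
    Ordinal.lift.{u, v} α.val < Ordinal.lift.{v, u} Omega1.{u} := by
  rw [lift_omega1.{u, v}]
  have h2 : Ordinal.lift.{u, v} α.val < Ordinal.lift.{u, v} Omega1.{v} :=
    Ordinal.lift_lt.mpr (Set.mem_Iio.mp α.2)
  rwa [lift_omega1.{v, u}] at h2

/-- Transport a countable ordinal from universe `v` to universe `u`. -/
def down (α : Set.Iio Omega1.{v}) : Set.Iio Omega1.{u} :=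
  ⟨(Ordinal.lt_lift_iff.mp (downAux.{u, v} α)).choose,
    Set.mem_Iio.mpr (Ordinal.lt_lift_iff.mp (downAux.{u, v} α)).choose_spec.1⟩

lemma down_lift (α : Set.Iio Omega1.{v}) :
    Ordinal.lift.{v, u} (down.{u, v} α).val = Ordinal.lift.{u, v} α.val :=
  (Ordinal.lt_lift_iff.mp (downAux.{u, v} α)).choose_spec.2

lemma down_lt_down {γ α : Set.Iio Omega1.{v}} (h : γ.val < α.val) :
    (down.{u, v} γ).val < (down.{u, v} α).val := by
  have h2 : Ordinal.lift.{v, u} (down.{u, v} γ).val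
      < Ordinal.lift.{v, u} (down.{u, v} α).val := by
    rw [down_lift, down_lift]
    exact Ordinal.lift_lt.mpr h
  exact Ordinal.lift_lt.mp h2

lemma down_surj {α : Set.Iio Omega1.{v}} {β : Set.Iio Omega1.{u}}
    (h : β.val < (down.{u, v} α).val) :
    ∃ γ : Set.Iio Omega1.{v}, γ.val < α.val ∧ down.{u, v} γ = β := by
  have h2 : Ordinal.lift.{v, u} β.val < Ordinal.lift.{v, u} (down.{u, v} α).val :=
    Ordinal.lift_lt.mpr h
  rw [down_lift] at h2
  obtain ⟨γ', hγ', he⟩ := Ordinal.lt_lift_iff.mp h2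
  refine ⟨⟨γ', Set.mem_Iio.mpr (hγ'.trans (Set.mem_Iio.mp α.2))⟩, hγ', ?_⟩
  apply Subtype.ext
  apply Ordinal.lift_inj.{v, u}.mp
  rw [down_lift]
  exact he

variable {σ : GState.{u} → GState.{u}}

lemma prevLen2 (hσ : GLegal σ) (y : OSeq Omega1.{u}) (α : Set.Iio Omega1.{v}) :
    prevLen (fun γ => Lfun hσ y (down.{u, v} γ)) α
      = lenF (σ := σ) y (down.{u, v} α).val := by
  rw [show lenF (σ := σ) y (down.{u, v} α).val
      = prevLen (Lfun hσ y) (down.{u, v} α) from (prevLen_eq hσ y (down.{u, v} α)).symm]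
  unfold prevLen
  have hr : Set.range (fun γ : Set.Iio α.val =>
        (Lfun hσ y (down.{u, v} ⟨γ.val, Set.mem_Iio.mpr
          (lt_trans (Set.mem_Iio.mp γ.2) (Set.mem_Iio.mp α.2))⟩)).val + 1)
      = Set.range (fun γ : Set.Iio (down.{u, v} α).val =>
        (Lfun hσ y ⟨γ.val, Set.mem_Iio.mpr
          (lt_trans (Set.mem_Iio.mp γ.2) (Set.mem_Iio.mp (down.{u, v} α).2))⟩).val + 1) := by
    ext x
    constructor
    · rintro ⟨γ, rfl⟩
      have hγα : γ.val < α.val := Set.mem_Iio.mp γ.2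
      set γv : Set.Iio Omega1.{v} := ⟨γ.val, Set.mem_Iio.mpr
        (lt_trans hγα (Set.mem_Iio.mp α.2))⟩ with hγv
      refine ⟨⟨(down.{u, v} γv).val, Set.mem_Iio.mpr (down_lt_down hγα)⟩, ?_⟩
      rfl
    · rintro ⟨γ, rfl⟩
      have hγα : γ.val < (down.{u, v} α).val := Set.mem_Iio.mp γ.2
      set β : Set.Iio Omega1.{u} := ⟨γ.val, Set.mem_Iio.mpr
        (lt_trans hγα (Set.mem_Iio.mp (down.{u, v} α).2))⟩ with hβ
      obtain ⟨γ0, hγ0, he⟩ := down_surj (show β.val < (down.{u, v} α).val from hγα)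
      refine ⟨⟨γ0.val, Set.mem_Iio.mpr hγ0⟩, ?_⟩
      show (Lfun hσ y (down.{u, v} ⟨γ0.val, _⟩)).val + 1 = (Lfun hσ y β).val + 1
      have : down.{u, v} (⟨γ0.val, Set.mem_Iio.mpr
          (lt_trans hγ0 (Set.mem_Iio.mp α.2))⟩ : Set.Iio Omega1.{v}) = β := by
        rw [show (⟨γ0.val, Set.mem_Iio.mpr (lt_trans hγ0 (Set.mem_Iio.mp α.2))⟩ :
          Set.Iio Omega1.{v}) = γ0 from Subtype.ext rfl]
        exact he
      rw [this]
  exact congrArg sSup hr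

lemma validL2 (hσ : GLegal σ) (y : OSeq Omega1.{u}) :
    ValidL (fun γ : Set.Iio Omega1.{v} => Lfun hσ y (down.{u, v} γ)) := by
  intro γ α h
  exact validL hσ y (down.{u, v} γ) (down.{u, v} α) (down_lt_down h)

lemma consI2 (hσ : GLegal σ) (y : OSeq Omega1.{u}) :
    GConsI σ (xseq hσ y) (fun γ : Set.Iio Omega1.{v} => Lfun hσ y (down.{u, v} γ)) := by
  intro α h
  have hp : prevLen (fun γ : Set.Iio Omega1.{v} => Lfun hσ y (down.{u, v} γ)) α
      = lenF (σ := σ) y (down.{u, v} α).val := prevLen2 hσ y α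
  set αu := down.{u, v} α with hαu
  have hαω := Set.mem_Iio.mp αu.2
  have hlω : lenF (σ := σ) y αu.val < Omega1.{u} := lenF_lt hσ y hαω
  have hsub : (⟨prevLen (fun γ : Set.Iio Omega1.{v} => Lfun hσ y (down.{u, v} γ)) α,
      Set.mem_Iio.mpr h⟩ : Set.Iio Omega1.{u})
      = ⟨lenF (σ := σ) y αu.val, Set.mem_Iio.mpr hlω⟩ := Subtype.ext hp
  rw [hsub, ← toG_eq_gStateAt hσ y hαω hlω]
  set t := σ (toG (F σ y αu.val) hlω) with ht
  have h2 : resSeq (le_of_lt (Set.mem_Iio.mp t.1.2)) (xseq hσ y) = t.2 := by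
    funext δ
    exact xseq_sigma_part hσ y αu (Set.mem_Iio.mp δ.2) _
  show t = gStateAt (xseq hσ y) (Lfun hσ y αu)
  have h3 : gStateAt (xseq hσ y) (Lfun hσ y αu) = ⟨t.1, t.2⟩ := by
    unfold gStateAt
    exact congrArg (Sigma.mk t.1) h2
  rw [h3]
  rfl

lemma paths_in_X2 (hσ : GLegal σ) {X : Set (OSeq Omega1.{u})}
    (hwin : ∀ (x : OSeq Omega1.{u}) (L : Set.Iio Omega1.{v} → Set.Iio Omega1.{u}),
      ValidL L → GConsI σ x L → x ∈ X)
    (f : OSeq Omega1.{u}) (hf : IsPath (Tset hσ) f) : f ∈ X := by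
  rw [path_eq hσ hf]
  exact hwin (xseq hσ f) (fun γ : Set.Iio Omega1.{v} => Lfun hσ f (down.{u, v} γ))
    (validL2 hσ f) (consI2 hσ f)

end PSG
end

/-- If Player I has a winning strategy in the perfect-set game of length `ω₁`
with payoff `X ⊆ (ω₁ → Bool)`, then `X` contains a perfect subset of height
`ω₁`: there is a perfect tree of height `ω₁` all of whose paths lie in `X`. -/
theorem perfectSetGame_I_wins_perfect_subset (X : Set (OSeq Omega1))
    (h : ∃ σ : GState → GState, GLegal σ ∧
      ∀ x L, ValidL L → GConsI σ x L → x ∈ X) :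
    ∃ T : Set (Σ β : Set.Iio Omega1, OSeq β.val), IsTree T ∧
      IsPerfectTree (Cardinal.aleph 1) T ∧ ∀ f : OSeq Omega1, IsPath T f → f ∈ X := by
  obtain ⟨σ, hσ, hwin⟩ := h
  refine ⟨PSG.Tset hσ, PSG.Tset_isTree hσ, ⟨?_, ?_⟩,
    fun f hf => PSG.paths_in_X2 hσ (fun x L hL hG => hwin x L hL hG) f hf⟩
  · intro C hCT hC
    exact PSG.chain_extends hσ hCT hC
  · intro f hf
    exact PSG.branch_card hσ hf
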